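/- arXiv:2412.20111 — 2 statements merged into one kernel-verified Lean document; each statement's English description precedes it below -/
import Mathlib

section
/- The Berezin integral over n pairs of Grassmann variables of the exponential of the quadratic form (ξ̄, Aξ) = Σᵢⱼ ξ̄ᵢ A(i,j) ξⱼ equals det(A), for any real n×n matrix A (no positivity or symmetry assumption needed). -/
open ExteriorAlgebra

noncomputable section

/-- Truncated exponential `Σ_{k<N} x^k / k!` (the full series terminates on nilpotents). -/
def texp {A : Type*} [Ring A] [Algebra ℝ A] (x : A) (N : ℕ) : A :=
  ∑ k ∈ Finset.range N, ((Nat.factorial k : ℝ)⁻¹) • x ^ k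

/-- The Grassmann algebra on `2n` generators `ξ₁,…,ξₙ, ξ̄₁,…,ξ̄ₙ`. -/
abbrev GA (n : ℕ) := ExteriorAlgebra ℝ ((Fin n ⊕ Fin n) → ℝ)

/-- The generator `ξᵢ`. -/
def xi {n : ℕ} (i : Fin n) : GA n := ι ℝ (Pi.single (Sum.inl i) 1)

/-- The generator `ξ̄ᵢ`. -/
def xibar {n : ℕ} (i : Fin n) : GA n := ι ℝ (Pi.single (Sum.inr i) 1)

/-! The summands `ξ̄ᵢ (Σⱼ Aᵢⱼ ξⱼ)` of the quadratic form are products of two generators, so they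
lie in a commutative subalgebra and square to zero. Hence the `n`-th power of their sum is
`n! ∏ᵢ ξ̄ᵢ (Σⱼ Aᵢⱼ ξⱼ)`, while the lower powers have degree `< 2n` and are killed by `B`: only the
`n`-th term of the exponential survives. As a function of the rows of `A`, `B (∏ᵢ ξ̄ᵢ (Σⱼ Aᵢⱼ ξⱼ))`
is multilinear and alternating (two equal rows make the product vanish), hence a multiple of
`det A`, and the normalisation of `B` makes the multiple `1`. -/

section CommMonoidWithZero
variable {ι M₀ : Type*} [CommMonoidWithZero M₀]

theorem Finset.prod_eq_zero_of_mul_eq_zero {s : Finset ι} {f : ι → M₀} {i j : ι} (hi : i ∈ s)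
    (hj : j ∈ s) (hij : i ≠ j) (h : f i * f j = 0) : ∏ k ∈ s, f k = 0 := by
  classical
  rw [← Finset.mul_prod_erase s f hi,
    ← Finset.mul_prod_erase _ f (Finset.mem_erase.2 ⟨hij.symm, hj⟩), ← mul_assoc, h, zero_mul]

end CommMonoidWithZero

section CommRing
variable {R : Type*} [CommRing R]

theorem add_pow_succ_of_sq_eq_zero {a : R} (ha : a ^ 2 = 0) (b : R) (N : ℕ) :
    (a + b) ^ (N + 1) = b ^ (N + 1) + (N + 1) * a * b ^ N := by
  induction N with
  | zero => ring
  | succ N ih =>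
    rw [pow_succ, ih]
    push_cast
    linear_combination ((N : R) + 1) * b ^ N * ha

theorem Finset.sum_mul_prod_of_sq_eq_zero {ι : Type*} {s : Finset ι} {f : ι → R}
    (hf : ∀ i ∈ s, f i ^ 2 = 0) : (∑ i ∈ s, f i) * ∏ i ∈ s, f i = 0 := by
  classical
  rw [Finset.sum_mul]
  refine Finset.sum_eq_zero fun i hi => ?_
  rw [← Finset.mul_prod_erase s f hi, ← mul_assoc, ← sq, hf i hi, zero_mul]

theorem Finset.sum_pow_card_of_sq_eq_zero {ι : Type*} (s : Finset ι) {f : ι → R}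
    (hf : ∀ i ∈ s, f i ^ 2 = 0) : (∑ i ∈ s, f i) ^ s.card = s.card.factorial • ∏ i ∈ s, f i := by
  classical
  induction s using Finset.induction_on with
  | empty => simp
  | insert a s has ih =>
    have hs : ∀ i ∈ s, f i ^ 2 = 0 := fun i hi => hf i (Finset.mem_insert_of_mem hi)
    have hvanish : (∑ i ∈ s, f i) ^ (s.card + 1) = 0 := by
      rw [pow_succ, ih hs, smul_mul_assoc, mul_comm, Finset.sum_mul_prod_of_sq_eq_zero hs,
        smul_zero]
    rw [Finset.sum_insert has, Finset.prod_insert has, Finset.card_insert_of_notMem has,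
      add_pow_succ_of_sq_eq_zero (hf a (Finset.mem_insert_self a s)), hvanish, ih hs,
      Nat.factorial_succ]
    simp only [nsmul_eq_mul]
    push_cast
    ring

end CommRing

theorem map_texp_succ_of_map_pow_eq_zero {A : Type*} [Ring A] [Algebra ℝ A] (B : A →ₗ[ℝ] ℝ)
    {x : A} {N : ℕ} (hB : ∀ k < N, B (x ^ k) = 0) :
    B (texp x (N + 1)) = (N.factorial : ℝ)⁻¹ * B (x ^ N) := by
  rw [texp, map_sum, Finset.sum_eq_single_of_mem N (Finset.self_mem_range_succ N), map_smul,
    smul_eq_mul]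
  intro k hk hkN
  rw [map_smul, hB k (by rw [Finset.mem_range] at hk; omega), smul_zero]

namespace AlternatingMap
variable {R V S ι : Type*} [CommSemiring R] [AddCommMonoid V] [Module R V] [CommSemiring S]
  [Algebra R S] [Fintype ι]

def piProd (q : ι → V →ₗ[R] S) (hq : ∀ i j w, q i w * q j w = 0) : V [⋀^ι]→ₗ[R] S where
  toMultilinearMap := (MultilinearMap.mkPiAlgebra R ι S).compLinearMap q
  map_eq_zero_of_eq' v i j hv hij := by
    change ∏ k, q k (v k) = 0
    exact Finset.prod_eq_zero_of_mul_eq_zero (Finset.mem_univ i) (Finset.mem_univ j) hij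
      (by rw [hv]; exact hq i j (v j))

end AlternatingMap

theorem AlternatingMap.apply_eq_apply_basisFun_mul_det {R ι : Type*} [CommRing R] [Fintype ι]
    [DecidableEq ι] (f : (ι → R) [⋀^ι]→ₗ[R] R) (v : ι → ι → R) :
    f v = f (Pi.basisFun R ι) * (Matrix.of v).det := by
  conv_lhs => rw [f.eq_smul_basis_det (Pi.basisFun R ι)]
  rw [AlternatingMap.smul_apply, Pi.basisFun_det_apply, smul_eq_mul]

namespace ExteriorAlgebra
variable {R M : Type*} [CommRing R] [AddCommGroup M] [Module R M]

theorem ι_mul_ι_anticomm (x y : M) : ι R x * ι R y = -(ι R y * ι R x) :=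
  eq_neg_of_add_eq_zero_left (ι_add_mul_swap x y)

theorem commute_ι_mul_ι_ι (a b c : M) : Commute (ι R a * ι R b) (ι R c) := by
  rw [Commute, SemiconjBy, mul_assoc, ι_mul_ι_anticomm b c, mul_neg, ← mul_assoc,
    ι_mul_ι_anticomm a c, neg_mul, neg_neg, mul_assoc]

variable (R M) in
def pairSubalgebra : Subalgebra R (ExteriorAlgebra R M) :=
  Algebra.adjoin R (Set.range fun p : M × M => ι R p.1 * ι R p.2)

instance : CommRing (pairSubalgebra R M) :=
  { (pairSubalgebra R M).toRing with
    mul_comm := by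
      have := Algebra.isMulCommutative_adjoin R
        (s := Set.range fun p : M × M => ι R p.1 * ι R p.2) (by
          rintro _ ⟨⟨a, b⟩, rfl⟩ _ ⟨⟨c, d⟩, rfl⟩
          exact ((commute_ι_mul_ι_ι a b c).mul_right (commute_ι_mul_ι_ι a b d)).eq)
      exact this.is_comm.comm }

variable (R) in
def pairLeft (a : M) : M →ₗ[R] pairSubalgebra R M where
  toFun m := ⟨ι R a * ι R m, Algebra.subset_adjoin ⟨(a, m), rfl⟩⟩
  map_add' x y := by ext; simp [mul_add]
  map_smul' r x := by ext; simp

@[simp]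
theorem coe_pairLeft (a m : M) : (pairLeft R a m : ExteriorAlgebra R M) = ι R a * ι R m := rfl

theorem pairLeft_mul_pairLeft_self (a b m : M) :
    pairLeft R a m * pairLeft R b m = (0 : pairSubalgebra R M) := by
  ext
  rw [Subalgebra.coe_mul, coe_pairLeft, coe_pairLeft, mul_assoc, ← mul_assoc (ι R m),
    ι_mul_ι_anticomm m b, neg_mul, mul_assoc, ι_sq_zero, mul_zero, neg_zero, mul_zero,
    ZeroMemClass.coe_zero]

theorem ι_mul_ι_mem_range_ι_pow_two (a b : M) :
    ι R a * ι R b ∈ LinearMap.range (ι R : M →ₗ[R] ExteriorAlgebra R M) ^ 2 := by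
  rw [sq]
  exact Submodule.mul_mem_mul (LinearMap.mem_range_self _ _) (LinearMap.mem_range_self _ _)

end ExteriorAlgebra

def xibarMulXi {n : ℕ} (i : Fin n) :
    (Fin n → ℝ) →ₗ[ℝ] pairSubalgebra ℝ ((Fin n ⊕ Fin n) → ℝ) :=
  pairLeft ℝ (Pi.single (Sum.inr i) 1) ∘ₗ
    Fintype.linearCombination ℝ fun j => Pi.single (Sum.inl j) 1

theorem coe_xibarMulXi {n : ℕ} (i : Fin n) (w : Fin n → ℝ) :
    (xibarMulXi i w : GA n) = ∑ j, w j • (xibar i * xi j) := by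
  simp [xibarMulXi, Fintype.linearCombination_apply, xibar, xi]

theorem xibarMulXi_mul_xibarMulXi_self {n : ℕ} (i j : Fin n) (w : Fin n → ℝ) :
    xibarMulXi i w * xibarMulXi j w = 0 :=
  pairLeft_mul_pairLeft_self _ _ _

theorem coe_prod_xibarMulXi_basisFun (n : ℕ) :
    ((∏ i, xibarMulXi i (Pi.basisFun ℝ (Fin n) i) : pairSubalgebra ℝ _) : GA n) =
      (List.ofFn fun i : Fin n => xibar i * xi i).reverse.prod := by
  rw [← List.prod_ofFn, ← List.prod_reverse, SubmonoidClass.coe_list_prod, List.map_reverse,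
    List.map_ofFn]
  congr 3
  ext i
  simp [coe_xibarMulXi, Pi.single_apply]

/-- Berezin integration ∫ D(ξ,ξ̄): for any linear functional `B` extracting the
coefficient of the top monomial `ξ̄ₙξₙ⋯ξ̄₁ξ₁` (i.e. vanishing on all homogeneous
components of degree `< 2n` and normalized by `B(ξ̄ₙξₙ⋯ξ̄₁ξ₁) = 1`), the integral of
`exp((ξ̄, Aξ))` equals `det A`, for an arbitrary real `n×n` matrix `A`. -/
theorem stmt_7 (n : ℕ) (A : Matrix (Fin n) (Fin n) ℝ)
    (B : GA n →ₗ[ℝ] ℝ)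
    (hB0 : ∀ k < 2 * n, ∀ x ∈ (LinearMap.range
      (ι ℝ : ((Fin n ⊕ Fin n) → ℝ) →ₗ[ℝ] GA n)) ^ k, B x = 0)
    (hB1 : B ((List.ofFn fun i : Fin n => xibar i * xi i).reverse.prod) = 1) :
    B (texp (∑ i : Fin n, ∑ j : Fin n, A i j • (xibar i * xi j)) (n + 1))
      = A.det := by
  set F : (Fin n → ℝ) [⋀^Fin n]→ₗ[ℝ] ℝ := B.compAlternatingMap
    ((pairSubalgebra ℝ _).val.toLinearMap.compAlternatingMap
      (AlternatingMap.piProd xibarMulXi xibarMulXi_mul_xibarMulXi_self))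
  have hF : ∀ v, F v = B (∏ i, xibarMulXi i (v i) : pairSubalgebra ℝ _) := fun _ => rfl
  have hquad : ∑ i, ∑ j, A i j • (xibar i * xi j) =
      (∑ i, xibarMulXi i (A i) : pairSubalgebra ℝ _) := by
    simp [coe_xibarMulXi]
  have hlow : ∀ k < n, B ((∑ i, ∑ j, A i j • (xibar i * xi j)) ^ k) = 0 := by
    intro k hk
    refine hB0 (2 * k) (by omega) _ ?_
    rw [pow_mul]
    exact Submodule.pow_mem_pow _ (Submodule.sum_mem _ fun i _ => Submodule.sum_mem _ fun j _ =>
      Submodule.smul_mem _ _ (ι_mul_ι_mem_range_ι_pow_two _ _)) k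
  have htop : (∑ i, xibarMulXi i (A i)) ^ n = n.factorial • ∏ i, xibarMulXi i (A i) := by
    simpa using Finset.sum_pow_card_of_sq_eq_zero Finset.univ (f := fun i => xibarMulXi i (A i))
      fun i _ => (sq _).trans (xibarMulXi_mul_xibarMulXi_self i i _)
  rw [map_texp_succ_of_map_pow_eq_zero B hlow, hquad, ← Subalgebra.coe_pow, htop,
    Subalgebra.coe_smul, map_nsmul, nsmul_eq_mul, inv_mul_cancel_left₀ (by positivity)]
  have hdet := F.apply_eq_apply_basisFun_mul_det fun i => A i
  rwa [hF, hF, coe_prod_xibarMulXi_basisFun, hB1, one_mul] at hdet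

end
end

section
/- Matrix-tree theorem: for a finite connected weighted graph G = (V, E, w) with positive edge weights and any fixed vertex o ∈ V, the determinant of the negative graph Laplacian with the row and column indexed by o removed equals the weighted count of spanning trees of G, Σ_{T spanning tree} Π_{e ∈ T} w_e; in the unweighted case (all w_e = 1) it equals the number of spanning trees. -/
/-!
Row `u` of the reduced negative Laplacian is `∑_{x ~ u} w(u,x) (e_u - e_x)`, where `e_o = 0`.
Multilinearity of the determinant expands it as a sum, over the maps `f` sending every vertex
`u ≠ o` to a neighbour, of `∏_u w(u, f u) · det (1 - A_f)`, with `A_f` the adjacency matrix of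
`f`. If iterating `f` drives every vertex to `o`, then `1 - A_f` is block triangular for the
depth order with identity blocks, so its determinant is `1`; otherwise the indicator of the
vertices that never reach `o` lies in its kernel. The maps of the first kind are exactly the
parent maps of spanning trees rooted at `o`, and `f ↦ {u, f u}` carries `∏_u w(u, f u)` to the
weight of the tree.
-/

noncomputable section
open Classical

/-- The Laplacian matrix of a weighted graph: `Δ(u,v) = w(u,v)` for edges `(u,v)`,
`Δ(u,u) = -Σ_x w(u,x)` (sum over neighbours), and `0` otherwise. -/
def lap {V : Type*} [Fintype V] [DecidableEq V] (G : SimpleGraph V)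
    (w : Sym2 V → ℝ) : Matrix V V ℝ :=
  fun u v =>
    if G.Adj u v then w s(u, v)
    else if u = v then -(∑ x : V, if G.Adj u x then w s(u, x) else 0)
    else 0

/-- The weighted number of spanning trees of `G`: the sum over all spanning trees `T`
of `G` of the product of the weights of the edges of `T`. -/
def treeCount {V : Type*} [Fintype V] [DecidableEq V] (G : SimpleGraph V)
    (w : Sym2 V → ℝ) : ℝ :=
  ∑ T : SimpleGraph V,
    if T ≤ G ∧ T.IsTree then ∏ e ∈ Finset.univ.filter (· ∈ T.edgeSet), w e else 0

theorem SimpleGraph.Connected.exists_adj_dist_lt {V : Type*} {H : SimpleGraph V}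
    (hH : H.Connected) {u o : V} (hu : u ≠ o) :
    ∃ y, H.Adj u y ∧ H.dist y o < H.dist u o := by
  obtain ⟨p, hp⟩ := hH.exists_walk_length_eq_dist u o
  have hnil : ¬p.Nil := SimpleGraph.Walk.not_nil_of_ne hu
  refine ⟨p.snd, p.adj_snd hnil, ?_⟩
  have := SimpleGraph.dist_le p.tail
  have := p.length_tail_add_one hnil
  omega

theorem Matrix.det_of_sum_rows {n κ R : Type*} [Fintype n] [DecidableEq n] [CommRing R]
    (t : n → Finset κ) (c : n → κ → R) (r : n → κ → n → R) :
    (Matrix.of fun i j => ∑ k ∈ t i, c i k * r i k j).det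
      = ∑ f ∈ Fintype.piFinset t,
          (∏ i, c i (f i)) * (Matrix.of fun i j => r i (f i) j).det := by
  have hrows : (Matrix.of fun i j => ∑ k ∈ t i, c i k * r i k j)
      = fun i => ∑ k ∈ t i, c i k • r i k := by
    ext i j
    simp [Finset.sum_apply]
  change Matrix.detRowAlternating.toMultilinearMap _ = _
  rw [hrows, MultilinearMap.map_sum_finset]
  refine Finset.sum_congr rfl fun f _ => ?_
  rw [MultilinearMap.map_smul_univ]
  rfl

namespace MatrixTree

section Iterate

variable {α : Type*} {g : α → α} {o : α}

theorem eq_of_isPeriodicPt_of_iterate_eq (ho : g o = o) {x : α} {n k : ℕ}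
    (hx : Function.IsPeriodicPt g n x) (hn : 0 < n) (hk : g^[k] x = o) : x = o := by
  have h : g^[n * k] x = g^[n * k - k] (g^[k] x) := by
    rw [← Function.iterate_add_apply, Nat.sub_add_cancel (Nat.le_mul_of_pos_left k hn)]
  rwa [(hx.mul_const k).eq, hk, Function.iterate_fixed ho] at h

theorem exists_iterate_eq_of_lt (d : α → ℕ) (hd : ∀ x, x ≠ o → d (g x) < d x) (x : α) :
    ∃ k, g^[k] x = o := by
  induction hx : d x using Nat.strong_induction_on generalizing x with
  | _ n ih =>
    by_cases hxo : x = o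
    · exact ⟨0, hxo⟩
    · obtain ⟨k, hk⟩ := ih _ (hx ▸ hd x hxo) (g x) rfl
      exact ⟨k + 1, hk⟩

theorem find_iterate_apply_lt (hr : ∀ x, ∃ k, g^[k] x = o) {x : α} (hx : x ≠ o) :
    Nat.find (hr (g x)) < Nat.find (hr x) := by
  obtain ⟨k, hk⟩ : ∃ k, Nat.find (hr x) = k + 1 :=
    Nat.exists_eq_succ_of_ne_zero fun h => hx (by simpa [h] using Nat.find_spec (hr x))
  have hgk : g^[k] (g x) = o := by
    have := Nat.find_spec (hr x)
    rwa [hk, Function.iterate_succ_apply] at this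
  have := Nat.find_min' (hr (g x)) hgk
  omega

end Iterate

variable {V : Type*}

section RootedMap

variable [DecidableEq V] {o : V} {f : {x // x ≠ o} → V}

def stepFun (o : V) (f : {x // x ≠ o} → V) (x : V) : V :=
  if h : x = o then o else f ⟨x, h⟩

@[simp] theorem stepFun_root : stepFun o f o = o := by simp [stepFun]

@[simp] theorem stepFun_coe (u : {x // x ≠ o}) : stepFun o f u = f u := by
  simp [stepFun, u.2]

def ReachesRoot (o : V) (f : {x // x ≠ o} → V) : Prop :=
  ∀ x, ∃ k, (stepFun o f)^[k] x = o

theorem ReachesRoot.apply_ne_self (hf : ReachesRoot o f) (u : {x // x ≠ o}) : f u ≠ u := by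
  intro h
  refine u.2 (eq_of_isPeriodicPt_of_iterate_eq stepFun_root ?_ one_pos (hf u).choose_spec)
  simpa [Function.IsPeriodicPt, Function.IsFixedPt] using h

theorem ReachesRoot.stepFun_apply_ne (hf : ReachesRoot o f) (u : {x // x ≠ o}) :
    stepFun o f (f u) ≠ u := by
  intro h
  refine u.2 (eq_of_isPeriodicPt_of_iterate_eq stepFun_root ?_ two_pos (hf u).choose_spec)
  show stepFun o f (stepFun o f u) = u
  rwa [stepFun_coe]

section Matrix

open Matrix

variable [Fintype V] (R : Type*) [CommRing R]

def succMatrix (o : V) (f : {x // x ≠ o} → V) : Matrix {x // x ≠ o} {x // x ≠ o} R :=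
  of fun u v => if f u = v then 1 else 0

variable {R}

theorem succMatrix_mulVec (x : V → R) (hx : x o = 0) :
    succMatrix R o f *ᵥ (fun v => x v) = fun u => x (f u) := by
  ext u
  by_cases hu : f u = o
  · simp [succMatrix, mulVec, dotProduct, hu, hx, fun v : {x // x ≠ o} => Ne.symm v.2]
  · rw [mulVec, dotProduct, Fintype.sum_eq_single ⟨f u, hu⟩] <;>
      simp +contextual [succMatrix, eq_comm]

theorem det_one_sub_succMatrix_of_reachesRoot (hf : ReachesRoot o f) :
    (1 - succMatrix R o f).det = 1 := by
  have hdepth : ∀ u v : {x // x ≠ o}, f u = v → Nat.find (hf v) < Nat.find (hf u) := by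
    intro u v h
    simpa [← h] using find_iterate_apply_lt hf u.2
  let b : {x // x ≠ o} → ℕᵒᵈ := fun u => OrderDual.toDual (Nat.find (hf u))
  have htri : (1 - succMatrix R o f).BlockTriangular b := by
    intro u v huv
    have hne : u ≠ v := by rintro rfl; exact lt_irrefl _ huv
    have hfu : f u ≠ v := fun h => (hdepth u v h).not_gt huv
    simp [succMatrix, one_apply, hne, hfu]
  have hblock : ∀ k, (1 - succMatrix R o f).toSquareBlock b k = 1 := by
    intro k
    ext ⟨u, hu⟩ ⟨v, hv⟩
    have hfu : f u ≠ v := fun h =>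
      (hdepth u v h).ne (OrderDual.toDual.injective (hv.trans hu.symm))
    simp [toSquareBlock_def, succMatrix, one_apply, hfu]
  rw [htri.det]
  exact Finset.prod_eq_one fun k _ => by rw [hblock, det_one]

theorem det_one_sub_succMatrix_of_not_reachesRoot [IsDomain R] (hf : ¬ReachesRoot o f) :
    (1 - succMatrix R o f).det = 0 := by
  let Escapes : V → Prop := fun x => ∀ k, (stepFun o f)^[k] x ≠ o
  have hesc : ∀ u : {x // x ≠ o}, Escapes (f u) ↔ Escapes u := by
    intro u
    refine ⟨fun h k => ?_, fun h k => by simpa using h (k + 1)⟩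
    cases k with
    | zero => exact u.2
    | succ k => simpa using h k
  obtain ⟨x₀, hx₀⟩ : ∃ x, Escapes x := by simpa [ReachesRoot, Escapes] using hf
  let ind : V → R := fun x => if Escapes x then 1 else 0
  have hind : ind o = 0 := if_neg fun h => h 0 rfl
  refine exists_mulVec_eq_zero_iff.1 ⟨fun v => ind v, fun h => ?_, ?_⟩
  · simpa [ind, hx₀] using congrFun h ⟨x₀, hx₀ 0⟩
  · rw [sub_mulVec, one_mulVec, succMatrix_mulVec ind hind]
    ext u
    simp [ind, hesc]

theorem det_one_sub_succMatrix [IsDomain R] [Decidable (ReachesRoot o f)] :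
    (1 - succMatrix R o f).det = if ReachesRoot o f then 1 else 0 := by
  split_ifs with hf
  · exact det_one_sub_succMatrix_of_reachesRoot hf
  · exact det_one_sub_succMatrix_of_not_reachesRoot hf

end Matrix

end RootedMap

section Laplacian

open Matrix

variable [Fintype V] [DecidableEq V] (G : SimpleGraph V) (w : Sym2 V → ℝ)

theorem neg_lap_apply (u v : V) :
    -lap G w u v = ∑ x ∈ G.neighborFinset u,
      w s(u, x) * ((if u = v then 1 else 0) - if x = v then 1 else 0) := by
  rw [SimpleGraph.neighborFinset_eq_filter, Finset.sum_filter]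
  by_cases huv : u = v
  · subst huv
    simp only [lap, SimpleGraph.irrefl, if_true, if_false, neg_neg]
    refine Finset.sum_congr rfl fun x _ => ?_
    split_ifs with hx hxu <;> simp_all
  · rw [Fintype.sum_eq_single v fun x hx => by simp [hx, huv]]
    by_cases hadj : G.Adj u v <;> simp [lap, huv, hadj]

theorem det_neg_lap_eq_sum (o : V) :
    (of fun u v : {x // x ≠ o} => -lap G w u v).det
      = ∑ f ∈ Fintype.piFinset fun u : {x // x ≠ o} => G.neighborFinset u,
          (∏ u : {x // x ≠ o}, w s(↑u, f u)) * (1 - succMatrix ℝ o f).det := by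
  simp_rw [neg_lap_apply]
  rw [det_of_sum_rows]
  refine Finset.sum_congr rfl fun f _ => ?_
  congr 2
  ext u v
  simp [succMatrix, one_apply, Subtype.ext_iff]

theorem det_neg_lap_eq_sum_reachesRoot (o : V) :
    (of fun u v : {x // x ≠ o} => -lap G w u v).det
      = ∑ f ∈ (Fintype.piFinset fun u : {x // x ≠ o} => G.neighborFinset u).filter
          (ReachesRoot o), ∏ u : {x // x ≠ o}, w s(↑u, f u) := by
  rw [det_neg_lap_eq_sum, Finset.sum_filter]
  refine Finset.sum_congr rfl fun f _ => ?_
  rw [det_one_sub_succMatrix]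
  split_ifs <;> simp

end Laplacian

section Trees

variable {o : V} {f : {x // x ≠ o} → V}

def treeOf (o : V) (f : {x // x ≠ o} → V) : SimpleGraph V :=
  SimpleGraph.fromEdgeSet (Set.range fun u : {x // x ≠ o} => s(↑u, f u))

theorem treeOf_le {H : SimpleGraph V} (hadj : ∀ u : {x // x ≠ o}, H.Adj u (f u)) :
    treeOf o f ≤ H := by
  rw [treeOf, SimpleGraph.fromEdgeSet_le]
  rintro _ ⟨⟨u, rfl⟩, -⟩
  exact hadj u

variable [DecidableEq V]

theorem edgeSet_treeOf (hf : ReachesRoot o f) :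
    (treeOf o f).edgeSet = Set.range fun u : {x // x ≠ o} => s(↑u, f u) := by
  rw [treeOf, SimpleGraph.edgeSet_fromEdgeSet, sdiff_eq_left, Set.disjoint_left]
  rintro _ ⟨u, rfl⟩ hdiag
  exact hf.apply_ne_self u (Sym2.mk_isDiag_iff.1 hdiag).symm

theorem treeOf_adj (hf : ReachesRoot o f) (u : {x // x ≠ o}) : (treeOf o f).Adj u (f u) := by
  rw [← SimpleGraph.mem_edgeSet, edgeSet_treeOf hf]
  exact ⟨u, rfl⟩

theorem ReachesRoot.injective_edge (hf : ReachesRoot o f) :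
    Function.Injective fun u : {x // x ≠ o} => s(↑u, f u) := by
  intro u v h
  rcases Sym2.eq_iff.1 h with ⟨huv, -⟩ | ⟨hufv, hfuv⟩
  · exact Subtype.ext huv
  · exact absurd (by rw [hfuv, stepFun_coe, hufv]) (hf.stepFun_apply_ne u)

theorem ReachesRoot.reachable_root (hf : ReachesRoot o f) (x : V) :
    (treeOf o f).Reachable x o := by
  obtain ⟨k, hk⟩ := hf x
  induction k generalizing x with
  | zero =>
    rw [Function.iterate_zero_apply] at hk
    rw [hk]
  | succ k ih =>
    by_cases hx : x = o
    · rw [hx]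
    · refine (treeOf_adj hf ⟨x, hx⟩).reachable.trans (ih _ ?_)
      simpa [stepFun, hx] using hk

theorem isTree_treeOf [Fintype V] (hf : ReachesRoot o f) : (treeOf o f).IsTree := by
  have : Nonempty V := ⟨o⟩
  have hconn : (treeOf o f).Connected :=
    ⟨fun x y => (hf.reachable_root x).trans (hf.reachable_root y).symm⟩
  refine SimpleGraph.isTree_iff_connected_and_card.2 ⟨hconn, ?_⟩
  rw [edgeSet_treeOf hf, Nat.card_range_of_injective hf.injective_edge, Nat.card_eq_fintype_card,
    Nat.card_eq_fintype_card, Fintype.card_subtype_compl, Fintype.card_subtype_eq]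
  have := Fintype.card_pos (α := V)
  omega

-- If `f u ≠ f' u`, the edge `{u, f u}` of the common tree is the `f'`-edge at `f u`, so
-- `f (f u) = f' (f u) = u` by induction on the time needed to reach `o`: a 2-cycle.
theorem treeOf_injective {f' : {x // x ≠ o} → V} (hf : ReachesRoot o f)
    (hf' : ReachesRoot o f') (h : treeOf o f = treeOf o f') : f = f' := by
  suffices ∀ k x, (stepFun o f)^[k] x = o → stepFun o f x = stepFun o f' x by
    funext u
    simpa using this _ _ (hf u).choose_spec
  intro k
  induction k with
  | zero =>
    intro x hx
    rw [Function.iterate_zero_apply] at hx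
    simp [hx]
  | succ k ih =>
    intro x hx
    by_cases hxo : x = o
    · simp [hxo]
    set u : {x // x ≠ o} := ⟨x, hxo⟩
    have hadj : (treeOf o f').Adj u (f u) := h ▸ treeOf_adj hf u
    rw [← SimpleGraph.mem_edgeSet, edgeSet_treeOf hf'] at hadj
    obtain ⟨v, hv⟩ := hadj
    show stepFun o f u = stepFun o f' u
    rcases Sym2.eq_iff.1 hv with ⟨hvu, hfv⟩ | ⟨hvfu, hfvu⟩
    · obtain rfl : v = u := Subtype.ext hvu
      simp [hfv]
    · have := ih (f u) (by simpa [u, stepFun, hxo] using hx)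
      exact absurd (this.trans (by rw [← hvfu, stepFun_coe, hfvu])) (hf.stepFun_apply_ne u)

theorem prod_edgeSet_treeOf [Fintype V] {M : Type*} [CommMonoid M] (hf : ReachesRoot o f)
    (w : Sym2 V → M) :
    ∏ e ∈ Finset.univ.filter (· ∈ (treeOf o f).edgeSet), w e
      = ∏ u : {x // x ≠ o}, w s(↑u, f u) := by
  rw [← Finset.prod_image fun u _ v _ h => hf.injective_edge h]
  congr 1
  ext e
  simp only [Finset.mem_filter, Finset.mem_univ, true_and, Finset.mem_image, edgeSet_treeOf hf,
    Set.mem_range]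

end Trees

theorem exists_reachesRoot_treeOf_eq [Fintype V] [DecidableEq V] {T : SimpleGraph V}
    (hT : T.IsTree) (o : V) :
    ∃ f : {x // x ≠ o} → V, ReachesRoot o f ∧ treeOf o f = T := by
  -- A parent map decreasing the distance to `o` spans a connected subgraph of `T`, hence `T`.
  choose f hfadj hfdist using fun u : {x // x ≠ o} => hT.connected.exists_adj_dist_lt u.2
  have hf : ReachesRoot o f :=
    exists_iterate_eq_of_lt (fun x => T.dist x o) fun x hx => by
      simpa [stepFun, hx] using hfdist ⟨x, hx⟩
  have hle : treeOf o f ≤ T := treeOf_le hfadj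
  exact ⟨f, hf, le_antisymm hle
    ((SimpleGraph.isTree_iff_minimal_connected.1 hT).2 (isTree_treeOf hf).connected hle)⟩

theorem sum_reachesRoot_eq_treeCount [Fintype V] [DecidableEq V] (G : SimpleGraph V)
    (w : Sym2 V → ℝ) (o : V) :
    ∑ f ∈ (Fintype.piFinset fun u : {x // x ≠ o} => G.neighborFinset u).filter
        (ReachesRoot o), ∏ u : {x // x ≠ o}, w s(↑u, f u) = treeCount G w := by
  rw [treeCount, ← Finset.sum_filter]
  refine Finset.sum_bij (fun f _ => treeOf o f) ?_ ?_ ?_ ?_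
  · intro f hf
    simp only [Finset.mem_filter, Fintype.mem_piFinset, SimpleGraph.mem_neighborFinset] at hf
    simpa using ⟨treeOf_le hf.1, isTree_treeOf hf.2⟩
  · intro f hf f' hf' h
    exact treeOf_injective (Finset.mem_filter.1 hf).2 (Finset.mem_filter.1 hf').2 h
  · intro T hT
    obtain ⟨hle, hT⟩ := (Finset.mem_filter.1 hT).2
    obtain ⟨f, hf, rfl⟩ := exists_reachesRoot_treeOf_eq hT o
    refine ⟨f, Finset.mem_filter.2 ⟨Fintype.mem_piFinset.2 fun u => ?_, hf⟩, rfl⟩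
    exact (G.mem_neighborFinset _ _).2 (hle (treeOf_adj hf u))
  · intro f hf
    exact (prod_edgeSet_treeOf (Finset.mem_filter.1 hf).2 w).symm

end MatrixTree

theorem stmt_12_general {V : Type*} [Fintype V] [DecidableEq V] (G : SimpleGraph V)
    (w : Sym2 V → ℝ) (o : V) :
    Matrix.det (Matrix.of fun u v : {x : V // x ≠ o} => -(lap G w u.1 v.1))
      = treeCount G w := by
  rw [MatrixTree.det_neg_lap_eq_sum_reachesRoot, MatrixTree.sum_reachesRoot_eq_treeCount]

/-- Matrix-tree (Kirchhoff) theorem: for a finite connected graph `G` with positive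
edge weights and any vertex `o`, the determinant of the negative Laplacian with the
row and column of `o` removed equals the weighted count of spanning trees
`Σ_{T spanning tree} Π_{e ∈ T} w_e` (the number of spanning trees when all weights
are `1`). -/
theorem stmt_12 {V : Type*} [Fintype V] [DecidableEq V] (G : SimpleGraph V)
    (w : Sym2 V → ℝ) (hw : ∀ e ∈ G.edgeSet, 0 < w e)
    (hconn : G.Connected) (o : V) :
    Matrix.det (Matrix.of fun u v : {x : V // x ≠ o} => -(lap G w u.1 v.1))
      = treeCount G w :=
  stmt_12_general G w o

end
end
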